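/- Let K be a field, let d ≤ n, and let N be a d×n matrix over K whose submatrix of columns 1, …, d is the d×d identity matrix. Let v = {1,…,d}, let C ⊆ ℝⁿ be a matroidal cone, and suppose the rank polytope of N equals (e_v + C) ∩ Δ_{d,n}, where e_v = e₁ + ⋯ + e_d. Then for all i with 1 ≤ i ≤ d and all j with j ≠ i and N_{ij} ≠ 0, we have e_j − e_i ∈ C. -/

import Mathlib

noncomputable section

/-- The standard basis vector `eᵢ` of `ℝⁿ`. -/
def eVec (n : ℕ) (i : Fin n) : Fin n → ℝ := Pi.single i 1

/-- A matroidal cone in `ℝⁿ`: the convex cone generated by finitely many vectors of the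
form `eᵢ − eⱼ` with `i ≠ j`. -/
def IsMatroidalCone {n : ℕ} (C : Set (Fin n → ℝ)) : Prop :=
  ∃ S : Finset (Fin n × Fin n), (∀ p ∈ S, p.1 ≠ p.2) ∧
    C = {x | ∃ c : Fin n × Fin n → ℝ, (∀ p, 0 ≤ c p) ∧
      x = ∑ p ∈ S, c p • (eVec n p.1 - eVec n p.2)}

/-- The rank polytope of a `d × n` matrix over a field `K`: the convex hull of the
vectors `e_B` over `d`-element column sets `B` with linearly independent columns. -/
def rankPolytope {K : Type*} [Field K] {d n : ℕ} (N : Matrix (Fin d) (Fin n) K) :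
    Set (Fin n → ℝ) :=
  convexHull ℝ {x | ∃ B : Finset (Fin n), B.card = d ∧
    LinearIndependent K (fun i : B => N.transpose (i : Fin n)) ∧
    x = ∑ i ∈ B, eVec n i}

/-- The hypersimplex `Δ_{d,n}`. -/
def hypersimplex (d n : ℕ) : Set (Fin n → ℝ) :=
  {x | (∀ i, 0 ≤ x i ∧ x i ≤ 1) ∧ ∑ i, x i = d}

/-!
Let `v = {1,…,d}` and `B = (v \ {i}) ∪ {j}`. The columns of `N` indexed by `v \ {i}` are the
standard basis vectors `eₖ`, `k ≠ i`, which span only vectors with vanishing `i`-th coordinate,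
while `N_{ij} ≠ 0`; so the columns indexed by `B` are linearly independent and `e_B` lies in
the rank polytope. By hypothesis `e_B = e_v + c` with `c ∈ C`, and
`c = e_B - e_v = e_j - e_i`.
-/

open Finset
open scoped Matrix

lemma Finset.sum_insert_erase_of_mem_of_notMem {α M : Type*} [DecidableEq α] [AddCommGroup M]
    {s : Finset α} {a b : α} (f : α → M) (ha : a ∈ s) (hb : b ∉ s) :
    ∑ x ∈ insert b (s.erase a), f x = ∑ x ∈ s, f x + (f b - f a) := by
  rw [sum_insert fun h => hb (mem_of_mem_erase h), sum_erase_eq_sub ha]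
  abel

lemma Finset.card_insert_erase_of_mem_of_notMem {α : Type*} [DecidableEq α]
    {s : Finset α} {a b : α} (ha : a ∈ s) (hb : b ∉ s) : #(insert b (s.erase a)) = #s := by
  rw [card_insert_of_notMem fun h => hb (mem_of_mem_erase h), card_erase_add_one ha]

lemma sum_eVec_apply {n : ℕ} (B : Finset (Fin n)) (r : Fin n) :
    (∑ b ∈ B, eVec n b) r = if r ∈ B then 1 else 0 := by
  simp [eVec, Finset.sum_apply, Pi.single_apply]

section IdentityBlock

variable {K : Type*} [Field K] {d n : ℕ} {hdn : d ≤ n} {N : Matrix (Fin d) (Fin n) K}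

lemma Matrix.transpose_castLE_eq_single
    (hid : ∀ i j : Fin d, N i (Fin.castLE hdn j) = if i = j then 1 else 0) (k : Fin d) :
    Nᵀ (Fin.castLE hdn k) = Pi.single k 1 := by
  ext r
  simp [hid, Pi.single_apply]

lemma Matrix.linearIndepOn_transpose_insert_range_castLE_diff
    (hid : ∀ i j : Fin d, N i (Fin.castLE hdn j) = if i = j then 1 else 0)
    {i : Fin d} {j : Fin n} (hN : N i j ≠ 0) :
    LinearIndepOn K Nᵀ (insert j (Set.range (Fin.castLE hdn) \ {Fin.castLE hdn i})) := by
  have hj : j ∉ Set.range (Fin.castLE hdn) \ {Fin.castLE hdn i} := by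
    rintro ⟨⟨k, rfl⟩, hk⟩
    exact hN (by rw [hid, if_neg]; rintro rfl; exact hk rfl)
  have hspan : Submodule.span K (Nᵀ '' (Set.range (Fin.castLE hdn) \ {Fin.castLE hdn i})) ≤
      LinearMap.ker (LinearMap.proj i) := by
    refine Submodule.span_le.2 ?_
    rintro _ ⟨_, ⟨⟨k, rfl⟩, hk⟩, rfl⟩
    have hki : k ≠ i := by rintro rfl; exact hk rfl
    simp [transpose_castLE_eq_single hid, hki.symm]
  refine (linearIndepOn_insert hj).2 ⟨LinearIndepOn.mono ?_ Set.sdiff_subset, fun h => hN (hspan h)⟩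
  refine (linearIndepOn_range_iff (Fin.castLE_injective hdn) _).2 ?_
  have hbasis : Nᵀ ∘ Fin.castLE hdn = Pi.basisFun K (Fin d) :=
    funext fun k => (transpose_castLE_eq_single hid k).trans (Pi.basisFun_apply K (Fin d) k).symm
  exact hbasis ▸ (Pi.basisFun K (Fin d)).linearIndependent

lemma Matrix.le_val_of_entry_ne_zero
    (hid : ∀ i j : Fin d, N i (Fin.castLE hdn j) = if i = j then 1 else 0)
    {i : Fin d} {j : Fin n} (hji : (j : ℕ) ≠ i) (hN : N i j ≠ 0) : d ≤ j := by
  by_contra! hjd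
  refine hN ?_
  rw [show j = Fin.castLE hdn ⟨j, hjd⟩ from rfl, hid, if_neg]
  exact fun h => hji (congrArg Fin.val h).symm

end IdentityBlock

theorem entry_ne_zero_mem_cone_general {K : Type*} [Field K] {d n : ℕ} (hdn : d ≤ n)
    (N : Matrix (Fin d) (Fin n) K)
    (hid : ∀ i j : Fin d, N i (Fin.castLE hdn j) = if i = j then 1 else 0)
    (C : Set (Fin n → ℝ))
    (hpoly : rankPolytope N =
      ((fun x => (fun i : Fin n => if (i : ℕ) < d then (1 : ℝ) else 0) + x) '' C) ∩
        hypersimplex d n) :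
    ∀ (i : Fin d) (j : Fin n), (j : ℕ) ≠ (i : ℕ) → N i j ≠ 0 →
      eVec n j - eVec n (Fin.castLE hdn i) ∈ C := by
  intro i j hji hN
  set v : Finset (Fin n) := {r | (r : ℕ) < d}
  have hv : (v : Set (Fin n)) = Set.range (Fin.castLE hdn) := by simp [v, Fin.range_castLE]
  have hiv : Fin.castLE hdn i ∈ v := by simp [v]
  have hjv : j ∉ v := by simpa [v] using N.le_val_of_entry_ne_zero hid hji hN
  set B := insert j (v.erase (Fin.castLE hdn i))
  have hcard : #B = d := by
    rw [card_insert_erase_of_mem_of_notMem hiv hjv, Fin.card_filter_val_lt, min_eq_right hdn]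
  have hLI : LinearIndepOn K Nᵀ (B : Set (Fin n)) := by
    rw [coe_insert, coe_erase, hv]
    exact N.linearIndepOn_transpose_insert_range_castLE_diff hid hN
  have hmem : ∑ b ∈ B, eVec n b ∈ rankPolytope N := subset_convexHull ℝ _ ⟨B, hcard, hLI, rfl⟩
  obtain ⟨⟨c, hc, hcB⟩, -⟩ := hpoly ▸ hmem
  have hv_sum : ∑ r ∈ v, eVec n r = fun r : Fin n => if (r : ℕ) < d then (1 : ℝ) else 0 :=
    funext fun r => by rw [sum_eVec_apply]; simp [v]
  rw [sum_insert_erase_of_mem_of_notMem _ hiv hjv, hv_sum] at hcB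
  rwa [← add_left_cancel hcB]

/-- If the first `d` columns of `N` form the identity and the rank polytope of `N` is the
cone-like polytope `(e_v + C) ∩ Δ` with `v = {1,…,d}`, then every nonzero off-diagonal
entry `N_{ij}` forces `e_j − e_i ∈ C`. -/
theorem entry_ne_zero_mem_cone {K : Type*} [Field K] {d n : ℕ} (hdn : d ≤ n)
    (N : Matrix (Fin d) (Fin n) K)
    (hid : ∀ i j : Fin d, N i (Fin.castLE hdn j) = if i = j then 1 else 0)
    (C : Set (Fin n → ℝ)) (hC : IsMatroidalCone C)
    (hpoly : rankPolytope N =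
      ((fun x => (fun i : Fin n => if (i : ℕ) < d then (1 : ℝ) else 0) + x) '' C) ∩
        hypersimplex d n) :
    ∀ (i : Fin d) (j : Fin n), (j : ℕ) ≠ (i : ℕ) → N i j ≠ 0 →
      eVec n j - eVec n (Fin.castLE hdn i) ∈ C :=
  entry_ne_zero_mem_cone_general hdn N hid C hpoly
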